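/- There exists a bijection B from the positive integers onto the set of all even binary partitions (of all even sums, including the empty partition) such that B_1 is the empty partition, the sums |B_k| are nondecreasing in k, and for every k the partition B_{k+1} is obtained from B_k either by an elementary move with k \ge 1 (i.e., replacing two copies of 2^j, j \ge 1, by one copy of 2^{j+1}, or vice versa) or by adding a single new part equal to 2. -/

import Mathlib

/-- An even binary partition: a multiset of parts, each a power of two that is at least 2. -/
def IsEvenBinaryPartition (P : Multiset ℕ) : Prop := ∀ p ∈ P, ∃ k : ℕ, 1 ≤ k ∧ p = 2 ^ k

/-- `P` and `Q` differ by an elementary move with `k ≥ 1`: `Q` is obtained from `P`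
by removing two copies of `2^k` and adding one copy of `2^(k+1)`, or vice versa. -/
def EvenElementaryMove (P Q : Multiset ℕ) : Prop :=
  ∃ k : ℕ, 1 ≤ k ∧
    (Q + {2 ^ k, 2 ^ k} = P + {2 ^ (k + 1)} ∨ P + {2 ^ k, 2 ^ k} = Q + {2 ^ (k + 1)})

/-!
Let `G n` (`binaryGray n`) list the binary partitions of `n` (parts `2 ^ j`, `j ≥ 0`) so that
consecutive entries differ by one move `2 ^ j + 2 ^ j ↔ 2 ^ (j + 1)`. Take `G (n + 1)` to be `G n`
reversed with a part `1` added to every entry, followed, when `n + 1 = 2 (m + 1)`, by `G (m + 1)`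
with all parts doubled. The seam is the move `1 + 1 ↔ 2`: the last entry of `G (2 m)` is the
double `2 q` of the last entry `q` of `G m`, so the seam joins `2 q + 1 + 1` to `2 (q + 1)`.

Doubling every part turns `G n` into a Gray code of the even binary partitions of `2 n`, and the
first entry of the doubled `G (n + 1)` is the last entry of the doubled `G n` plus a part `2`.
Concatenating these blocks for `n = 0, 1, 2, …` gives the sequence.
-/

namespace List

variable {α : Type*} (l : ℕ → List α)

def concatBlocks (n : ℕ) : List α := (range n).flatMap l

/-- The `i`-th entry of `l 0 ++ l 1 ++ ⋯`; it is the junk value `default` only if the blocks run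
out before index `i`. -/
def concatSeq [Inhabited α] (i : ℕ) : α := (concatBlocks l (i + 1)).getD i default

variable {l}

theorem concatBlocks_succ (n : ℕ) : concatBlocks l (n + 1) = concatBlocks l n ++ l n := by
  simp [concatBlocks, range_succ]

theorem concatBlocks_prefix {m n : ℕ} (h : m ≤ n) : concatBlocks l m <+: concatBlocks l n := by
  obtain ⟨k, rfl⟩ := Nat.exists_eq_add_of_le h
  simp [concatBlocks, range_add]

theorem le_length_concatBlocks (hl : ∀ n, l n ≠ []) (n : ℕ) :
    n ≤ (concatBlocks l n).length := by
  induction n with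
  | zero => simp
  | succ n ih =>
    rw [concatBlocks_succ, length_append]
    have := length_pos_iff.2 (hl n)
    omega

theorem getElem_concatBlocks [Inhabited α] (hl : ∀ n, l n ≠ []) {n i : ℕ}
    (hi : i < (concatBlocks l n).length) : (concatBlocks l n)[i] = concatSeq l i := by
  have hi' : i < (concatBlocks l (i + 1)).length := le_length_concatBlocks hl (i + 1)
  rw [concatSeq, getD_eq_getElem _ _ hi']
  rcases le_total n (i + 1) with h | h
  · exact (concatBlocks_prefix h).getElem hi
  · exact ((concatBlocks_prefix h).getElem hi').symm

theorem concatSeq_rel [Inhabited α] {R : α → α → Prop} (hl : ∀ n, l n ≠ [])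
    (hchain : ∀ n, (l n).IsChain R)
    (hjoin : ∀ n, ∀ x ∈ (l n).getLast?, ∀ y ∈ (l (n + 1)).head?, R x y) (i : ℕ) :
    R (concatSeq l i) (concatSeq l (i + 1)) := by
  have hconcat : ∀ n, (concatBlocks l n).IsChain R := by
    intro n
    induction n with
    | zero => simp [concatBlocks]
    | succ n ih =>
      rw [concatBlocks_succ]
      refine ih.append (hchain n) ?_
      cases n with
      | zero => simp [concatBlocks]
      | succ n =>
        rw [concatBlocks_succ, getLast?_append_of_ne_nil _ (hl n)]
        exact hjoin n
  have hlen := le_length_concatBlocks hl (i + 2)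
  have := isChain_iff_getElem.1 (hconcat (i + 2)) i (by omega)
  rwa [getElem_concatBlocks hl, getElem_concatBlocks hl] at this

theorem concatSeq_injective [Inhabited α] (hl : ∀ n, l n ≠ []) (hnodup : ∀ n, (l n).Nodup)
    (hdisj : _root_.Pairwise fun m n => Disjoint (l m) (l n)) :
    Function.Injective (concatSeq l) := by
  intro i j hij
  set n := max i j + 1
  have hnd : (concatBlocks l n).Nodup :=
    nodup_flatMap.2 ⟨fun m _ => hnodup m, nodup_range.imp fun h => hdisj h⟩
  have hlen := le_length_concatBlocks hl n
  have hi : i < (concatBlocks l n).length := by omega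
  have hj : j < (concatBlocks l n).length := by omega
  rw [← getElem_concatBlocks hl hi, ← getElem_concatBlocks hl hj] at hij
  exact (hnd.getElem_inj_iff).1 hij

theorem mem_range_concatSeq [Inhabited α] (hl : ∀ n, l n ≠ []) {x : α} :
    x ∈ Set.range (concatSeq l) ↔ ∃ n, x ∈ l n := by
  constructor
  · rintro ⟨i, rfl⟩
    have hi : i < (concatBlocks l (i + 1)).length := le_length_concatBlocks hl (i + 1)
    rw [← getElem_concatBlocks hl hi]
    obtain ⟨n, -, hn⟩ := mem_flatMap.1 (getElem_mem hi)
    exact ⟨n, hn⟩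
  · rintro ⟨n, hx⟩
    have : x ∈ concatBlocks l (n + 1) := by
      rw [concatBlocks_succ]; exact mem_append_right _ hx
    obtain ⟨i, hi, rfl⟩ := mem_iff_getElem.1 this
    exact ⟨i, (getElem_concatBlocks hl hi).symm⟩

end List

def IsBinaryPartition (P : Multiset ℕ) : Prop := ∀ p ∈ P, ∃ j, p = 2 ^ j

def doubleParts (P : Multiset ℕ) : Multiset ℕ := P.map (2 * ·)

def ElementaryMoveAt (j : ℕ) (P Q : Multiset ℕ) : Prop :=
  Q + {2 ^ j, 2 ^ j} = P + {2 ^ (j + 1)} ∨ P + {2 ^ j, 2 ^ j} = Q + {2 ^ (j + 1)}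

theorem doubleParts_add (P Q : Multiset ℕ) :
    doubleParts (P + Q) = doubleParts P + doubleParts Q :=
  Multiset.map_add _ _ _

theorem sum_doubleParts (P : Multiset ℕ) : (doubleParts P).sum = 2 * P.sum := by
  simpa [doubleParts] using Multiset.sum_map_mul_left (s := P) (f := id) (a := 2)

theorem doubleParts_injective : Function.Injective doubleParts :=
  Multiset.map_injective fun _ _ h => by omega

theorem one_notMem_doubleParts (P : Multiset ℕ) : 1 ∉ doubleParts P := by
  simp only [doubleParts, Multiset.mem_map, not_exists, not_and]
  omega

theorem isEvenBinaryPartition_iff {P : Multiset ℕ} :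
    IsEvenBinaryPartition P ↔ ∃ Q, IsBinaryPartition Q ∧ doubleParts Q = P := by
  constructor
  · intro hP
    refine ⟨P.map (· / 2), ?_, ?_⟩
    · simp only [IsBinaryPartition, Multiset.mem_map]
      rintro _ ⟨p, hp, rfl⟩
      obtain ⟨k, hk, rfl⟩ := hP p hp
      exact ⟨k - 1, by rw [← Nat.pow_div hk two_pos, pow_one]⟩
    · rw [doubleParts, Multiset.map_map]
      refine (Multiset.map_congr rfl fun p hp => ?_).trans P.map_id
      obtain ⟨k, hk, rfl⟩ := hP p hp
      exact Nat.mul_div_cancel' (dvd_pow_self 2 (by omega))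
  · rintro ⟨Q, hQ, rfl⟩ _ hp
    obtain ⟨q, hq, rfl⟩ := Multiset.mem_map.1 hp
    obtain ⟨j, rfl⟩ := hQ q hq
    exact ⟨j + 1, by omega, (pow_succ' 2 j).symm⟩

theorem IsEvenBinaryPartition.isBinaryPartition {P : Multiset ℕ} (hP : IsEvenBinaryPartition P) :
    IsBinaryPartition P :=
  fun p hp => (hP p hp).imp fun _ => And.right

theorem IsBinaryPartition.isEvenBinaryPartition {P : Multiset ℕ} (hP : IsBinaryPartition P)
    (h1 : 1 ∉ P) : IsEvenBinaryPartition P := by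
  intro p hp
  obtain ⟨j, rfl⟩ := hP p hp
  refine ⟨j, Nat.one_le_iff_ne_zero.2 ?_, rfl⟩
  rintro rfl
  exact h1 hp

namespace ElementaryMoveAt

variable {j : ℕ} {P Q : Multiset ℕ}

theorem symm (h : ElementaryMoveAt j P Q) : ElementaryMoveAt j Q P := Or.symm h

theorem add_right (h : ElementaryMoveAt j P Q) (R : Multiset ℕ) :
    ElementaryMoveAt j (P + R) (Q + R) := by
  rcases h with h | h
  · exact Or.inl (by rw [add_right_comm, h, add_right_comm])
  · exact Or.inr (by rw [add_right_comm, h, add_right_comm])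

theorem double (h : ElementaryMoveAt j P Q) :
    ElementaryMoveAt (j + 1) (doubleParts P) (doubleParts Q) := by
  have key : ∀ {P Q : Multiset ℕ}, Q + {2 ^ j, 2 ^ j} = P + {2 ^ (j + 1)} →
      doubleParts Q + {2 ^ (j + 1), 2 ^ (j + 1)} = doubleParts P + {2 ^ (j + 1 + 1)} := by
    intro P Q h
    simpa [← doubleParts_add, doubleParts, pow_succ'] using congrArg doubleParts h
  exact h.imp key key

theorem sum_eq (h : ElementaryMoveAt j P Q) : P.sum = Q.sum := by
  have h2 : (2 : ℕ) ^ (j + 1) = 2 ^ j + 2 ^ j := by ring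
  rcases h with h | h <;>
  · have := congrArg Multiset.sum h
    simp only [Multiset.sum_add, Multiset.insert_eq_cons, Multiset.sum_cons,
      Multiset.sum_singleton] at this
    omega

end ElementaryMoveAt

def binaryGray : ℕ → List (Multiset ℕ)
  | 0 => [0]
  | n + 1 => (binaryGray n).reverse.map (· + {1}) ++
      if 2 ∣ n + 1 then (binaryGray ((n + 1) / 2)).map doubleParts else []
decreasing_by all_goals omega

namespace binaryGray

theorem ne_nil (n : ℕ) : binaryGray n ≠ [] := by
  induction n with
  | zero => simp [binaryGray]
  | succ n ih => simp [binaryGray, ih]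

theorem head?_succ (n : ℕ) :
    (binaryGray (n + 1)).head? = (binaryGray n).getLast?.map (· + {1}) := by
  obtain ⟨P, hP⟩ := Option.isSome_iff_exists.1 (List.getLast?_isSome.2 (ne_nil n))
  simp [binaryGray, List.head?_append, hP]

theorem getLast?_two_mul (m : ℕ) :
    (binaryGray (2 * m)).getLast? = (binaryGray m).getLast?.map doubleParts := by
  rcases m with _ | m
  · simp [binaryGray, doubleParts]
  · rw [show 2 * (m + 1) = 2 * m + 1 + 1 by ring, binaryGray, if_pos (by omega),
      List.getLast?_append_of_ne_nil _ (by simpa using ne_nil _), List.getLast?_map]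
    congr 3
    omega

theorem mem_iff {n : ℕ} {P : Multiset ℕ} :
    P ∈ binaryGray n ↔ IsBinaryPartition P ∧ P.sum = n := by
  induction n using binaryGray.induct generalizing P with
  | case1 =>
    simp only [binaryGray, List.mem_singleton]
    refine ⟨by rintro rfl; simp [IsBinaryPartition], fun ⟨hP, hsum⟩ => ?_⟩
    refine Multiset.eq_zero_of_forall_notMem fun p hp => ?_
    obtain ⟨j, rfl⟩ := hP _ hp
    exact pow_ne_zero j two_ne_zero (Multiset.sum_eq_zero_iff.1 hsum _ hp)
  | case2 n ih ih_half =>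
    simp only [binaryGray, List.mem_append, List.mem_map, List.mem_reverse]
    constructor
    · rintro (⟨Q, hQ, rfl⟩ | hP)
      · obtain ⟨hQbin, rfl⟩ := ih.1 hQ
        refine ⟨fun p hp => ?_, by simp⟩
        rcases Multiset.mem_add.1 hp with hp | hp
        · exact hQbin p hp
        · exact ⟨0, by simpa using hp⟩
      · split_ifs at hP with h2
        · obtain ⟨Q, hQ, rfl⟩ := List.mem_map.1 hP
          obtain ⟨hQbin, hsum⟩ := (ih_half h2).1 hQ
          refine ⟨(isEvenBinaryPartition_iff.2 ⟨Q, hQbin, rfl⟩).isBinaryPartition, ?_⟩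
          rw [sum_doubleParts, hsum, Nat.mul_div_cancel' h2]
        · simp at hP
    · rintro ⟨hP, hsum⟩
      by_cases h1 : 1 ∈ P
      · refine Or.inl ⟨P.erase 1, ih.2 ⟨fun p hp => hP p (Multiset.mem_of_mem_erase hp), ?_⟩,
          by rw [add_comm, Multiset.singleton_add, Multiset.cons_erase h1]⟩
        have := Multiset.sum_erase h1
        omega
      · obtain ⟨Q, hQ, rfl⟩ := isEvenBinaryPartition_iff.1 (hP.isEvenBinaryPartition h1)
        rw [sum_doubleParts] at hsum
        have h2 : 2 ∣ n + 1 := ⟨Q.sum, by omega⟩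
        rw [if_pos h2]
        exact Or.inr (List.mem_map.2 ⟨Q, (ih_half h2).2 ⟨hQ, by omega⟩, rfl⟩)

theorem nodup (n : ℕ) : (binaryGray n).Nodup := by
  induction n using binaryGray.induct with
  | case1 => simp [binaryGray]
  | case2 n ih ih_half =>
    rw [binaryGray]
    refine List.Nodup.append (List.Nodup.map (add_left_injective _) (List.nodup_reverse.2 ih)) ?_ ?_
    · split_ifs with h2
      · exact List.Nodup.map doubleParts_injective (ih_half h2)
      · exact List.nodup_nil
    · intro P hP hP'
      split_ifs at hP' with h2
      · obtain ⟨Q, -, rfl⟩ := List.mem_map.1 hP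
        obtain ⟨R, -, hR⟩ := List.mem_map.1 hP'
        exact one_notMem_doubleParts R (hR ▸ Multiset.mem_add.2 (Or.inr (by simp)))
      · simp at hP'

theorem isChain (n : ℕ) : (binaryGray n).IsChain fun P Q => ∃ j, ElementaryMoveAt j P Q := by
  induction n using binaryGray.induct with
  | case1 => simp [binaryGray]
  | case2 n ih ih_half =>
    rw [binaryGray]
    refine List.IsChain.append ?_ ?_ ?_
    · rw [List.isChain_map, List.isChain_reverse]
      exact ih.imp fun P Q ⟨j, h⟩ => ⟨j, h.symm.add_right _⟩
    · split_ifs with h2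
      · exact (List.isChain_map _).2 ((ih_half h2).imp fun P Q ⟨j, h⟩ => ⟨j + 1, h.double⟩)
      · exact List.isChain_nil
    · split_ifs with h2
      · obtain ⟨m, rfl⟩ : ∃ m, n = 2 * m + 1 := ⟨n / 2, by omega⟩
        obtain ⟨q, hq⟩ := Option.isSome_iff_exists.1 (List.getLast?_isSome.2 (ne_nil m))
        intro P hP Q hQ
        rw [List.getLast?_map, List.getLast?_reverse, head?_succ, getLast?_two_mul, hq] at hP
        rw [List.head?_map, show (2 * m + 1 + 1) / 2 = m + 1 by omega, head?_succ, hq] at hQ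
        simp only [Option.map_some, Option.mem_def, Option.some.injEq] at hP hQ
        subst hP hQ
        refine ⟨0, Or.inl ?_⟩
        simp only [doubleParts_add, Multiset.insert_eq_cons, ← Multiset.singleton_add]
        simp only [doubleParts, Multiset.map_singleton, mul_one, zero_add, pow_zero, pow_one]
        abel
      · simp

end binaryGray

def evenGrayBlock (n : ℕ) : List (Multiset ℕ) := (binaryGray n).map doubleParts

def evenGray : ℕ → Multiset ℕ := List.concatSeq evenGrayBlock

namespace evenGrayBlock

theorem ne_nil (n : ℕ) : evenGrayBlock n ≠ [] := by
  simpa [evenGrayBlock] using binaryGray.ne_nil n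

theorem mem_iff {n : ℕ} {P : Multiset ℕ} :
    P ∈ evenGrayBlock n ↔ IsEvenBinaryPartition P ∧ P.sum = 2 * n := by
  simp only [evenGrayBlock, List.mem_map, binaryGray.mem_iff, isEvenBinaryPartition_iff]
  constructor
  · rintro ⟨Q, ⟨hQ, rfl⟩, rfl⟩
    exact ⟨⟨Q, hQ, rfl⟩, sum_doubleParts Q⟩
  · rintro ⟨⟨Q, hQ, rfl⟩, hsum⟩
    rw [sum_doubleParts] at hsum
    exact ⟨Q, ⟨hQ, by omega⟩, rfl⟩

theorem nodup (n : ℕ) : (evenGrayBlock n).Nodup :=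
  List.Nodup.map doubleParts_injective (binaryGray.nodup n)

theorem pairwise_disjoint : Pairwise fun m n => (evenGrayBlock m).Disjoint (evenGrayBlock n) := by
  intro m n hmn P hm hn
  have := (mem_iff.1 hm).2.symm.trans (mem_iff.1 hn).2
  omega

theorem isChain (n : ℕ) : (evenGrayBlock n).IsChain EvenElementaryMove :=
  (List.isChain_map _).2 <| (binaryGray.isChain n).imp fun _ _ ⟨j, h⟩ =>
    ⟨j + 1, by omega, h.double⟩

theorem head?_succ (n : ℕ) :
    (evenGrayBlock (n + 1)).head? = (evenGrayBlock n).getLast?.map (· + {2}) := by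
  simp [evenGrayBlock, binaryGray.head?_succ, List.getLast?_map, Option.map_map,
    Function.comp_def, doubleParts]

end evenGrayBlock

theorem evenGray_step (i : ℕ) :
    EvenElementaryMove (evenGray i) (evenGray (i + 1)) ∨ evenGray (i + 1) = evenGray i + {2} := by
  refine List.concatSeq_rel (R := fun P Q => EvenElementaryMove P Q ∨ Q = P + {2})
    evenGrayBlock.ne_nil (fun n => (evenGrayBlock.isChain n).imp fun _ _ => Or.inl)
    (fun n P hP Q hQ => Or.inr ?_) i
  rw [evenGrayBlock.head?_succ, Option.mem_def.1 hP] at hQ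
  simpa using hQ.symm

theorem evenGray_zero : evenGray 0 = 0 := by
  simp [evenGray, List.concatSeq, List.concatBlocks, evenGrayBlock, binaryGray, doubleParts]

theorem evenGray_injective : Function.Injective evenGray :=
  List.concatSeq_injective evenGrayBlock.ne_nil evenGrayBlock.nodup
    evenGrayBlock.pairwise_disjoint

theorem range_evenGray : Set.range evenGray = {P | IsEvenBinaryPartition P} := by
  ext P
  rw [evenGray, List.mem_range_concatSeq evenGrayBlock.ne_nil]
  simp only [evenGrayBlock.mem_iff]
  refine ⟨fun ⟨_, hP, _⟩ => hP, fun hP => ?_⟩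
  obtain ⟨Q, -, rfl⟩ := isEvenBinaryPartition_iff.1 hP
  exact ⟨Q.sum, hP, sum_doubleParts Q⟩

theorem monotone_sum_evenGray : Monotone fun i => (evenGray i).sum := by
  refine monotone_nat_of_le_succ fun i => ?_
  rcases evenGray_step i with ⟨k, -, h⟩ | h
  · exact (ElementaryMoveAt.sum_eq h).le
  · simp [h]

theorem gray_sequence_even_binary_partitions :
    ∃ B : ℕ+ → Multiset ℕ,
      (∀ k, IsEvenBinaryPartition (B k)) ∧
      Function.Injective B ∧
      (∀ P : Multiset ℕ, IsEvenBinaryPartition P → ∃ k, B k = P) ∧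
      B 1 = 0 ∧
      Monotone (fun k => (B k).sum) ∧
      (∀ k, EvenElementaryMove (B k) (B (k + 1)) ∨ B (k + 1) = B k + {2}) := by
  refine ⟨fun k => evenGray k.natPred, fun k => ?_,
    evenGray_injective.comp PNat.natPred_injective, fun P hP => ?_, evenGray_zero,
    monotone_sum_evenGray.comp PNat.natPred_monotone, fun k => ?_⟩
  · exact range_evenGray.subset (Set.mem_range_self _)
  · obtain ⟨i, rfl⟩ := range_evenGray.symm.subset hP
    exact ⟨i.succPNat, congrArg evenGray (Nat.natPred_succPNat i)⟩
  · have : (k + 1).natPred = k.natPred + 1 := by simp [PNat.natPred, Nat.sub_add_cancel k.pos]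
    simpa only [this] using evenGray_step k.natPred
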